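/- arXiv:1804.00957 — 2 statements merged into one kernel-verified Lean document; each statement's English description precedes it below -/
import Mathlib

section
/- Let n ≥ 3 be odd and let J be a nonempty even subgraph of the wheel W_n. Then W_n admits no σ_{J,(4,1)}-faithful flow if and only if among any three consecutive edges of the external cycle of W_n at least one belongs to J (equivalently, J has no m-connector with m ≥ 2, i.e. no maximal run of at least three consecutive external-cycle edges outside J). -/
open scoped Classical

/-- A finite multigraph: finite vertex and edge types together with a reference
orientation recorded by source and target maps.  The underlying undirected graph
is obtained by forgetting the directions; reorienting an edge corresponds to
negating the value of a flow on it. -/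
structure Multigraph where
  V : Type
  E : Type
  [fintypeV : Fintype V]
  [fintypeE : Fintype E]
  src : E → V
  tgt : E → V

attribute [instance] Multigraph.fintypeV Multigraph.fintypeE

namespace Multigraph

/-- `f` is a flow with respect to the reference orientation: at every vertex the
sum of the values on incoming edges equals the sum on outgoing edges. -/
def IsFlow (G : Multigraph) {M : Type*} [AddCommMonoid M] (f : G.E → M) : Prop :=
  ∀ v : G.V, (∑ e : G.E, Set.indicator {e' : G.E | G.tgt e' = v} f e)
           = ∑ e : G.E, Set.indicator {e' : G.E | G.src e' = v} f e

/-- The edge `e` joins the vertices `v` and `w` (in either direction). -/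
def Joins (G : Multigraph) (e : G.E) (v w : G.V) : Prop :=
  (G.src e = v ∧ G.tgt e = w) ∨ (G.src e = w ∧ G.tgt e = v)

/-- `v` and `w` are adjacent: some edge joins them. -/
def Adj (G : Multigraph) (v w : G.V) : Prop := ∃ e : G.E, G.Joins e v w

/-- The degree of a vertex (loops count twice). -/
noncomputable def degree (G : Multigraph) (v : G.V) : ℕ :=
  Nat.card {e : G.E // G.src e = v} + Nat.card {e : G.E // G.tgt e = v}

/-- A set of edges is an even subgraph if every vertex is incident with an even
number of its edges (loops counting twice). -/
def IsEvenSubgraph (G : Multigraph) (J : Set G.E) : Prop :=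
  ∀ v : G.V, Even (Nat.card {e : G.E // e ∈ J ∧ G.src e = v}
    + Nat.card {e : G.E // e ∈ J ∧ G.tgt e = v})

/-- `G` has a circular nowhere-zero `r`-flow: for some orientation (encoded by
possibly negating values with respect to the reference orientation) there is a
real-valued flow with all values in `[1, r-1]`. -/
def HasCNZF (G : Multigraph) (r : ℝ) : Prop :=
  ∃ f : G.E → ℝ, G.IsFlow f ∧
    ∀ e : G.E, f e ∈ Set.Icc 1 (r - 1) ∨ -f e ∈ Set.Icc 1 (r - 1)

/-- The circular flow number `Φ_c(G)`, as an extended real (`⊤` if no `r`-CNZF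
exists for any `r ≥ 2`). -/
noncomputable def flowNumber (G : Multigraph) : EReal :=
  sInf {x : EReal | ∃ r : ℝ, x = (r : EReal) ∧ 2 ≤ r ∧ G.HasCNZF r}

/-- `G` has a modular circular nowhere-zero `r`-flow: a flow with values in
`ℝ/rℤ` lying (up to reorientation) in the image of `[1, r-1]`. -/
def HasMCNZF (G : Multigraph) (r : ℝ) : Prop :=
  ∃ f : G.E → AddCircle r, G.IsFlow f ∧
    ∀ e : G.E, f e ∈ (fun t : ℝ => (t : AddCircle r)) '' Set.Icc 1 (r - 1) ∨
      -f e ∈ (fun t : ℝ => (t : AddCircle r)) '' Set.Icc 1 (r - 1)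

/-- `G` has a sub-`r`-MCNZF: an `r`-MCNZF all of whose values lie in the image
of the open interval `(1, r-1)`. -/
def HasSubMCNZF (G : Multigraph) (r : ℝ) : Prop :=
  ∃ f : G.E → AddCircle r, G.IsFlow f ∧
    ∀ e : G.E, f e ∈ (fun t : ℝ => (t : AddCircle r)) '' Set.Ioo 1 (r - 1) ∨
      -f e ∈ (fun t : ℝ => (t : AddCircle r)) '' Set.Ioo 1 (r - 1)

end Multigraph

/-- The right endpoint representative: the representative of `b` in `(a, a+5]`. -/
def arcEnd (a b : ℤ) : ℤ := a + (if (b - a) % 5 = 0 then 5 else (b - a) % 5)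

/-- The open integer arc `(a, b)` in `ℝ/5ℤ`: the image of the real interval
`(a, b')` where `b'` is the representative of `b` in `(a, a+5]`. -/
def arc (a b : ℤ) : Set (AddCircle (5 : ℝ)) :=
  (fun t : ℝ => (t : AddCircle (5 : ℝ))) '' Set.Ioo (a : ℝ) (arcEnd a b : ℝ)

/-- `SI_5`: the symmetric subsets of `ℝ/5ℤ` that are unions of open integer arcs. -/
def SI5 : Set (Set (AddCircle (5 : ℝ))) :=
  {A | (∀ z, z ∈ A ↔ -z ∈ A) ∧ ∃ s : Set (ℤ × ℤ), A = ⋃ p ∈ s, arc p.1 p.2}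

/-- The measure `Me A`: the number of (distinct) open unit arcs contained in `A`. -/
noncomputable def Me (A : Set (AddCircle (5 : ℝ))) : ℕ :=
  Set.ncard {B : Set (AddCircle (5 : ℝ)) | B ⊆ A ∧ ∃ k : ℤ, B = arc k (k + 1)}

namespace Multigraph

/-- `G⁺_{xy}`: the graph `G` with one extra edge `e⁺` from `x` to `y`. -/
def addEdge (G : Multigraph) (x y : G.V) : Multigraph where
  V := G.V
  E := Option G.E
  src := fun e => e.elim x G.src
  tgt := fun e => e.elim y G.tgt

/-- The open 5-capacity of the generalised edge `G_{xy}`: all values that can pass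
from `x` to `y` through `G` by a modular 5-flow of `G⁺_{xy}` whose values on the
edges of `G` lie in the open arc `(1,4)`. -/
def CP5 (G : Multigraph) (x y : G.V) : Set (AddCircle (5 : ℝ)) :=
  {w | ∃ f : Option G.E → AddCircle (5 : ℝ),
    (G.addEdge x y).IsFlow f ∧ (∀ e : G.E, f (some e) ∈ arc 1 4) ∧ f none = w}

/-- `G` has a sub-5-MCNZF: a modular 5-flow with all values in the open arc `(1,4)`. -/
def HasSub5 (G : Multigraph) : Prop :=
  ∃ f : G.E → AddCircle (5 : ℝ), G.IsFlow f ∧ ∀ e : G.E, f e ∈ arc 1 4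

/-- `G` has a `σ`-faithful flow: a modular 5-flow `f` with `f e ∈ σ e` for all `e`. -/
def HasFaithful (G : Multigraph) (σ : G.E → Set (AddCircle (5 : ℝ))) : Prop :=
  ∃ f : G.E → AddCircle (5 : ℝ), G.IsFlow f ∧ ∀ e : G.E, f e ∈ σ e

/-- `G` has a `σ_{J,A}`-faithful flow: a modular 5-flow with values in `A` on the
edges of `J` and in the open arc `(1,4)` on all other edges. -/
def HasFaithfulOn (G : Multigraph) (J : Set G.E) (A : Set (AddCircle (5 : ℝ))) : Prop :=
  ∃ f : G.E → AddCircle (5 : ℝ), G.IsFlow f ∧ (∀ e ∈ J, f e ∈ A) ∧ ∀ e ∉ J, f e ∈ arc 1 4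

end Multigraph

/-- Cyclic successor on `Fin n`. -/
def rot (n : ℕ) (i : Fin n) : Fin n := ⟨(i.val + 1) % n, Nat.mod_lt _ i.pos⟩

/-- The wheel `W_n`: the external cycle `v_1 … v_n` (vertices `some i`, rim edges
`Sum.inl i` from `v_i` to `v_{i+1}`) together with a hub `v_c = none` joined to
every rim vertex by the spokes `Sum.inr i`. -/
def wheel (n : ℕ) : Multigraph where
  V := Option (Fin n)
  E := Fin n ⊕ Fin n
  src := fun e => match e with
    | Sum.inl i => some i
    | Sum.inr _ => none
  tgt := fun e => match e with
    | Sum.inl i => some (rot n i)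
    | Sum.inr i => some i

section AuxProof

open Fin.NatCast Fin.CommRing

set_option maxHeartbeats 1000000

lemma coe_eq_coe_iff (u r : ℝ) :
    ((u : AddCircle (5:ℝ)) = (r : AddCircle (5:ℝ))) ↔ ∃ k : ℤ, u = r + 5*k := by
  rw [QuotientAddGroup.eq_iff_sub_mem, AddSubgroup.mem_zmultiples_iff]
  constructor
  · rintro ⟨k, hk⟩; rw [zsmul_eq_mul] at hk; exact ⟨k, by linarith⟩
  · rintro ⟨k, hk⟩; exact ⟨k, by rw [zsmul_eq_mul]; linarith⟩

lemma mem_image_Ioo_iff (a b r : ℝ) :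
    ((r : AddCircle (5:ℝ)) ∈ (fun t : ℝ => (t : AddCircle (5:ℝ))) '' Set.Ioo a b)
      ↔ ∃ k : ℤ, a < r + 5*k ∧ r + 5*k < b := by
  constructor
  · rintro ⟨u, hu, h⟩
    obtain ⟨k, hk⟩ := (coe_eq_coe_iff u r).mp h
    exact ⟨k, by rw [← hk]; exact hu.1, by rw [← hk]; exact hu.2⟩
  · rintro ⟨k, h1, h2⟩
    exact ⟨r + 5*k, ⟨h1, h2⟩, ((coe_eq_coe_iff _ r).mpr ⟨k, rfl⟩)⟩

lemma mem_arc14_iff (r : ℝ) : ((r : AddCircle (5:ℝ)) ∈ arc 1 4) ↔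
    ∃ k : ℤ, 1 < r + 5*k ∧ r + 5*k < 4 := by
  have h4 : arcEnd 1 4 = 4 := by norm_num [arcEnd]
  rw [arc, h4]
  push_cast
  exact mem_image_Ioo_iff 1 4 r

lemma mem_arc41_iff (r : ℝ) : ((r : AddCircle (5:ℝ)) ∈ arc 4 1) ↔
    ∃ k : ℤ, 4 < r + 5*k ∧ r + 5*k < 6 := by
  have h4 : arcEnd 4 1 = 6 := by norm_num [arcEnd]
  rw [arc, h4]
  push_cast
  exact mem_image_Ioo_iff 4 6 r

lemma arc14_of {r : ℝ} (h1 : 1 < r) (h2 : r < 4) : ((r : AddCircle (5:ℝ)) ∈ arc 1 4) :=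
  (mem_arc14_iff r).mpr ⟨0, by push_cast; linarith, by push_cast; linarith⟩

lemma arc14_of' {r : ℝ} (h1 : -4 < r) (h2 : r < -1) : ((r : AddCircle (5:ℝ)) ∈ arc 1 4) :=
  (mem_arc14_iff r).mpr ⟨1, by push_cast; linarith, by push_cast; linarith⟩

lemma arc41_of {r : ℝ} (h1 : -1 < r) (h2 : r < 1) : ((r : AddCircle (5:ℝ)) ∈ arc 4 1) :=
  (mem_arc41_iff r).mpr ⟨1, by push_cast; linarith, by push_cast; linarith⟩

lemma arc41_of' {r : ℝ} (h1 : -5 < r) (h2 : r < -4) : ((r : AddCircle (5:ℝ)) ∈ arc 4 1) :=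
  (mem_arc41_iff r).mpr ⟨2, by push_cast; linarith, by push_cast; linarith⟩

lemma arc14_cases {r : ℝ} (h : ((r : AddCircle (5:ℝ)) ∈ arc 1 4)) (hb1 : -5 < r) (hb2 : r < 5) :
    (1 < r ∧ r < 4) ∨ (-4 < r ∧ r < -1) := by
  obtain ⟨k, h1, h2⟩ := (mem_arc14_iff r).mp h
  have hk1 : (-2 : ℤ) < k := by
    have : (-2 : ℝ) < k := by nlinarith
    exact_mod_cast this
  have hk2 : (k : ℤ) < 2 := by
    have : (k : ℝ) < 2 := by nlinarith
    exact_mod_cast this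
  interval_cases k
  · exfalso; push_cast at h1 h2; linarith
  · left; push_cast at h1 h2; constructor <;> linarith
  · right; push_cast at h1 h2; constructor <;> linarith

lemma arc41_cases {r : ℝ} (h : ((r : AddCircle (5:ℝ)) ∈ arc 4 1)) (hb1 : -5 < r) (hb2 : r < 5) :
    (4 < r ∧ r < 5) ∨ (-1 < r ∧ r < 1) ∨ (-5 < r ∧ r < -4) := by
  obtain ⟨k, h1, h2⟩ := (mem_arc41_iff r).mp h
  have hk1 : (-1 : ℤ) < k := by
    have : (-1 : ℝ) < k := by nlinarith
    exact_mod_cast this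
  have hk2 : (k : ℤ) < 3 := by
    have : (k : ℝ) < 3 := by nlinarith
    exact_mod_cast this
  interval_cases k
  · left; push_cast at h1 h2; constructor <;> linarith
  · right; left; push_cast at h1 h2; constructor <;> linarith
  · right; right; push_cast at h1 h2; constructor <;> linarith

lemma coe_sub_eq (x y : ℝ) : ((x - y : ℝ) : AddCircle (5:ℝ)) = (x : AddCircle (5:ℝ)) - (y : AddCircle (5:ℝ)) := rfl

lemma no_seq (n : ℕ) [NeZero n] (hn : 3 ≤ n) (hodd : Odd n) (s : Fin n → Prop)
    (hgap : ∀ i : Fin n, s i ∨ s (i+1) ∨ s (i+2))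
    (a : Fin n → AddCircle (5:ℝ))
    (hv1 : ∀ i, s i → a i ∈ arc 4 1) (hv2 : ∀ i, ¬ s i → a i ∈ arc 1 4)
    (hd1 : ∀ i, ¬(s i ↔ s (i-1)) → a i - a (i-1) ∈ arc 4 1)
    (hd2 : ∀ i, (s i ↔ s (i-1)) → a i - a (i-1) ∈ arc 1 4) : False := by
  -- choose real lifts
  have ht : ∀ i, ∃ x : ℝ, (x : AddCircle (5:ℝ)) = a i ∧
      (s i → -1 < x ∧ x < 1) ∧ (¬ s i → 1 < x ∧ x < 4) := by
    intro i
    by_cases h : s i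
    · obtain ⟨u, hu, he⟩ := hv1 i h
      have h6 : arcEnd 4 1 = 6 := by norm_num [arcEnd]
      rw [h6] at hu
      push_cast at hu
      refine ⟨u - 5, ?_, fun _ => ⟨by linarith [hu.1], by linarith [hu.2]⟩, fun h' => absurd h h'⟩
      rw [← he]
      exact (coe_eq_coe_iff _ _).mpr ⟨-1, by push_cast; ring⟩
    · obtain ⟨u, hu, he⟩ := hv2 i h
      have h4 : arcEnd 1 4 = 4 := by norm_num [arcEnd]
      rw [h4] at hu
      push_cast at hu
      exact ⟨u, he, fun h' => absurd h' h, fun _ => ⟨hu.1, hu.2⟩⟩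
  choose t htc hts htn using ht
  -- basic range facts
  have hrange : ∀ i, -1 < t i ∧ t i < 4 := by
    intro i
    by_cases h : s i
    · exact ⟨(hts i h).1, by linarith [(hts i h).2]⟩
    · exact ⟨by linarith [(htn i h).1], (htn i h).2⟩
  -- diffs as reals
  have hdiff : ∀ i : Fin n, ((t (i+1) - t i : ℝ) : AddCircle (5:ℝ)) = a (i+1) - a i := by
    intro i
    rw [coe_sub_eq, htc, htc]
  have hsub : ∀ i : Fin n, (i + 1 - 1 : Fin n) = i := fun i => add_sub_cancel_right i 1
  have hd1' : ∀ i : Fin n, ¬(s (i+1) ↔ s i) →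
      ((t (i+1) - t i : ℝ) : AddCircle (5:ℝ)) ∈ arc 4 1 := by
    intro i h
    rw [hdiff i]
    have := hd1 (i+1) (by rw [hsub i]; exact h)
    rwa [hsub i] at this
  have hd2' : ∀ i : Fin n, (s (i+1) ↔ s i) →
      ((t (i+1) - t i : ℝ) : AddCircle (5:ℝ)) ∈ arc 1 4 := by
    intro i h
    rw [hdiff i]
    have := hd2 (i+1) (by rw [hsub i]; exact h)
    rwa [hsub i] at this
  -- refined ranges on non-S positions
  have hR : ∀ i, ¬ s i → (1 < t i ∧ t i < 2) ∨ (3 < t i ∧ t i < 4) := by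
    intro i h
    have hg := hgap (i - 1)
    rw [sub_add_cancel] at hg
    have hg2 : (i - 1 + 2 : Fin n) = i + 1 := by ring
    rw [hg2] at hg
    have hxr := htn i h
    rcases hg with hg | hg | hg
    · -- s (i-1): use the spoke at i, i.e. between i-1 and i
      have hprev : ((i - 1) + 1 : Fin n) = i := by ring
      have hsw : ¬ (s ((i-1)+1) ↔ s (i-1)) := by rw [hprev]; tauto
      have hmem := hd1' (i-1) hsw
      rw [hprev] at hmem
      have hyr := hts (i-1) hg
      have hb1 : -5 < t i - t (i-1) := by linarith [hxr.1, hyr.2]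
      have hb2 : t i - t (i-1) < 5 := by linarith [hxr.2, hyr.1]
      rcases arc41_cases hmem hb1 hb2 with ⟨h1, h2⟩ | ⟨h1, h2⟩ | ⟨h1, h2⟩
    -- d = t i - t (i-1) ∈ (4,5): t i = t(i-1)+d ∈ (3,6) → (3,4)
      · right; exact ⟨by linarith [hyr.1], hxr.2⟩
      · left; exact ⟨hxr.1, by linarith [hyr.2]⟩
      · exfalso; linarith [hyr.1, hxr.2]
    · exact absurd hg h
    · -- s (i+1): use the spoke at i+1
      have hsw : ¬ (s (i+1) ↔ s i) := by tauto
      have hmem := hd1' i hsw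
      have hyr := hts (i+1) hg
      have hb1 : -5 < t (i+1) - t i := by linarith [hyr.1, hxr.2]
      have hb2 : t (i+1) - t i < 5 := by linarith [hyr.2, hxr.1]
      rcases arc41_cases hmem hb1 hb2 with ⟨h1, h2⟩ | ⟨h1, h2⟩ | ⟨h1, h2⟩
      · exfalso; linarith [hyr.2, hxr.1]
      · left; exact ⟨hxr.1, by linarith [hyr.2]⟩
      · right; exact ⟨by linarith [hyr.1], hxr.2⟩
  -- the sign sequence
  set B : Fin n → ZMod 2 := fun i => if 0 < t i ∧ t i < 2 then 1 else 0 with hB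
  set G : Fin n → ZMod 2 := fun i => if s i then 1 else 0 with hG
  have key : ∀ i : Fin n, B (i+1) + B i = 1 + (G (i+1) + G i) := by
    intro i
    have hstep : ((0 < t (i+1) ∧ t (i+1) < 2) ↔ (0 < t i ∧ t i < 2)) ↔ ¬ (s (i+1) ↔ s i) := by
      by_cases hsi : s i <;> by_cases hsi1 : s (i+1)
      · -- TT: flip
        have hx := hts i hsi
        have hy := hts (i+1) hsi1
        have hmem := hd2' i (by tauto)
        rcases arc14_cases hmem (by linarith [hx.2, hy.1]) (by linarith [hx.1, hy.2])
          with ⟨h1, h2⟩ | ⟨h1, h2⟩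
        · have hyp : 0 < t (i+1) ∧ t (i+1) < 2 := ⟨by linarith [hx.1], by linarith [hy.2]⟩
          have hxp : ¬ (0 < t i ∧ t i < 2) := by rintro ⟨h3, -⟩; linarith [hy.2]
          simp only [iff_true_intro hyp, true_iff, iff_false_intro hxp]
          tauto
        · have hxp : 0 < t i ∧ t i < 2 := ⟨by linarith [hy.1], by linarith [hx.2]⟩
          have hyp : ¬ (0 < t (i+1) ∧ t (i+1) < 2) := by rintro ⟨h3, -⟩; linarith [hx.2]
          simp only [iff_true_intro hxp, iff_true, iff_false_intro hyp]
          tauto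
      · -- TF : s i, ¬ s (i+1) : same sign
        have hx := hts i hsi
        have hmem := hd1' i (by tauto)
        rcases hR (i+1) hsi1 with hy | hy
        · -- y ∈ (1,2) : both positive
          have hyp : 0 < t (i+1) ∧ t (i+1) < 2 := ⟨by linarith [hy.1], hy.2⟩
          rcases arc41_cases hmem (by linarith [hy.2, hx.1]) (by linarith [hy.1, hx.2])
            with ⟨h1, h2⟩ | ⟨h1, h2⟩ | ⟨h1, h2⟩
          · exfalso; linarith [hy.2, hx.1]
          · have hxp : 0 < t i ∧ t i < 2 := ⟨by linarith [hy.1], by linarith [hx.2]⟩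
            simp only [iff_true_intro hyp, iff_true_intro hxp]
            tauto
          · exfalso; linarith [hy.1, hx.2]
        · -- y ∈ (3,4) : both negative
          have hyp : ¬ (0 < t (i+1) ∧ t (i+1) < 2) := by rintro ⟨-, h3⟩; linarith [hy.1]
          rcases arc41_cases hmem (by linarith [hy.2, hx.1]) (by linarith [hy.1, hx.2])
            with ⟨h1, h2⟩ | ⟨h1, h2⟩ | ⟨h1, h2⟩
          · have hxp : ¬ (0 < t i ∧ t i < 2) := by rintro ⟨h3, -⟩; linarith [hy.2]
            simp only [iff_false_intro hyp, iff_false_intro hxp]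
            tauto
          · exfalso; linarith [hy.1, hx.2]
          · exfalso; linarith [hy.2, hx.1]
      · -- FT : ¬ s i, s (i+1) : same sign
        have hy := hts (i+1) hsi1
        have hmem := hd1' i (by tauto)
        rcases hR i hsi with hx | hx
        · have hxp : 0 < t i ∧ t i < 2 := ⟨by linarith [hx.1], hx.2⟩
          rcases arc41_cases hmem (by linarith [hy.1, hx.2]) (by linarith [hy.2, hx.1])
            with ⟨h1, h2⟩ | ⟨h1, h2⟩ | ⟨h1, h2⟩
          · exfalso; linarith [hy.2, hx.1]
          · have hyp : 0 < t (i+1) ∧ t (i+1) < 2 := ⟨by linarith [hx.1], by linarith [hy.2]⟩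
            simp only [iff_true_intro hyp, iff_true_intro hxp]
            tauto
          · exfalso; linarith [hy.1, hx.2]
        · have hxp : ¬ (0 < t i ∧ t i < 2) := by rintro ⟨-, h3⟩; linarith [hx.1]
          rcases arc41_cases hmem (by linarith [hy.1, hx.2]) (by linarith [hy.2, hx.1])
            with ⟨h1, h2⟩ | ⟨h1, h2⟩ | ⟨h1, h2⟩
          · exfalso; linarith [hy.2, hx.1]
          · exfalso; linarith [hy.1, hx.2]
          · have hyp : ¬ (0 < t (i+1) ∧ t (i+1) < 2) := by rintro ⟨h3, -⟩; linarith [hx.2]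
            simp only [iff_false_intro hyp, iff_false_intro hxp]
            tauto
      · -- FF : flip
        have hmem := hd2' i (by tauto)
        rcases hR i hsi with hx | hx <;> rcases hR (i+1) hsi1 with hy | hy
        · exfalso
          rcases arc14_cases hmem (by linarith [hx.2, hy.1]) (by linarith [hx.1, hy.2])
            with ⟨h1, h2⟩ | ⟨h1, h2⟩ <;> linarith [hx.1, hx.2, hy.1, hy.2]
        · have hxp : 0 < t i ∧ t i < 2 := ⟨by linarith [hx.1], hx.2⟩
          have hyp : ¬ (0 < t (i+1) ∧ t (i+1) < 2) := by rintro ⟨-, h3⟩; linarith [hy.1]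
          simp only [iff_true_intro hxp, iff_false_intro hyp]
          tauto
        · have hyp : 0 < t (i+1) ∧ t (i+1) < 2 := ⟨by linarith [hy.1], hy.2⟩
          have hxp : ¬ (0 < t i ∧ t i < 2) := by rintro ⟨-, h3⟩; linarith [hx.1]
          simp only [iff_true_intro hyp, iff_false_intro hxp]
          tauto
        · exfalso
          rcases arc14_cases hmem (by linarith [hx.2, hy.1]) (by linarith [hx.1, hy.2])
            with ⟨h1, h2⟩ | ⟨h1, h2⟩ <;> linarith [hx.1, hx.2, hy.1, hy.2]
    -- now convert the iff into the ZMod 2 identity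
    simp only [hB, hG]
    split_ifs <;> first | decide | (exfalso; tauto)
  -- sum the step identity around the cycle
  have hsum : ∑ i : Fin n, (B (i+1) + B i) = ∑ i : Fin n, (1 + (G (i+1) + G i)) :=
    Finset.sum_congr rfl (fun i _ => key i)
  have hshiftB : ∑ i : Fin n, B (i+1) = ∑ i : Fin n, B i :=
    Fintype.sum_equiv (Equiv.addRight 1) _ _ (fun i => rfl)
  have hshiftG : ∑ i : Fin n, G (i+1) = ∑ i : Fin n, G i :=
    Fintype.sum_equiv (Equiv.addRight 1) _ _ (fun i => rfl)
  have hself : ∀ c : ZMod 2, c + c = 0 := by decide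
  rw [Finset.sum_add_distrib, hshiftB] at hsum
  rw [Finset.sum_add_distrib, Finset.sum_add_distrib, hshiftG] at hsum
  rw [hself, hself] at hsum
  rw [Finset.sum_const, Finset.card_univ, Fintype.card_fin] at hsum
  obtain ⟨m, hm⟩ := hodd
  rw [hm] at hsum
  simp only [nsmul_eq_mul, mul_one, add_zero] at hsum
  have : ((2 * m + 1 : ℕ) : ZMod 2) = 1 := by push_cast; ring_nf; simp [CharTwo.two_eq_zero]
  rw [this] at hsum
  exact one_ne_zero hsum.symm

lemma rot_eq (n : ℕ) [NeZero n] (hn : 3 ≤ n) (i : Fin n) : rot n i = i + 1 := by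
  apply Fin.ext
  have : (1 : Fin n).val = 1 := by rw [Fin.val_one']; exact Nat.mod_eq_of_lt (by omega)
  simp [rot, Fin.add_def, this]

lemma wheel_isFlow_iff (n : ℕ) [NeZero n] (hn : 3 ≤ n) (f : (Fin n ⊕ Fin n) → AddCircle (5:ℝ)) :
    (wheel n).IsFlow f ↔
      ((∀ i : Fin n, f (Sum.inl (i-1)) + f (Sum.inr i) = f (Sum.inl i)) ∧
       0 = ∑ i : Fin n, f (Sum.inr i)) := by
  have key : ∀ v : Option (Fin n),
      ((∑ e : Fin n ⊕ Fin n, Set.indicator {e' : Fin n ⊕ Fin n | (wheel n).tgt e' = v} f e)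
      = ∑ e : Fin n ⊕ Fin n, Set.indicator {e' : Fin n ⊕ Fin n | (wheel n).src e' = v} f e)
      ↔ (match v with
        | some i => f (Sum.inl (i-1)) + f (Sum.inr i) = f (Sum.inl i)
        | none => 0 = ∑ i : Fin n, f (Sum.inr i)) := by
    intro v
    match v with
    | some i =>
      simp only [Set.indicator_apply, Set.mem_setOf_eq]
      rw [Fintype.sum_sum_type, Fintype.sum_sum_type]
      have h1 : ∀ j : Fin n, ((wheel n).tgt (Sum.inl j) = some i) = (j = i - 1) := by
        intro j
        simp only [wheel, rot_eq n hn, Option.some.injEq]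
        rw [eq_iff_iff]
        constructor
        · intro h; rw [← h]; ring
        · intro h; rw [h]; ring
      have h2 : ∀ j : Fin n, ((wheel n).tgt (Sum.inr j) = some i) = (j = i) := by
        intro j; simp [wheel]
      have h3 : ∀ j : Fin n, ((wheel n).src (Sum.inl j) = some i) = (j = i) := by
        intro j; simp [wheel]
      have h4 : ∀ j : Fin n, ((wheel n).src (Sum.inr j) = some i) = False := by
        intro j; simp [wheel]
      simp only [h1, h2, h3, h4, if_false]
      rw [Finset.sum_ite_eq' Finset.univ (i-1) (fun j => f (Sum.inl j)),
        Finset.sum_ite_eq' Finset.univ i (fun j => f (Sum.inr j)),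
        Finset.sum_ite_eq' Finset.univ i (fun j => f (Sum.inl j))]
      simp
    | none =>
      simp only [Set.indicator_apply, Set.mem_setOf_eq]
      rw [Fintype.sum_sum_type, Fintype.sum_sum_type]
      have h1 : ∀ j : Fin n, ((wheel n).tgt (Sum.inl j) = none) = False := by
        intro j; simp [wheel]
      have h2 : ∀ j : Fin n, ((wheel n).tgt (Sum.inr j) = none) = False := by
        intro j; simp [wheel]
      have h3 : ∀ j : Fin n, ((wheel n).src (Sum.inl j) = none) = False := by
        intro j; simp [wheel]
      have h4 : ∀ j : Fin n, ((wheel n).src (Sum.inr j) = none) = True := by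
        intro j; simp [wheel]
      simp only [h1, h2, h3, h4, if_false, if_true]
      simp
  constructor
  · intro h
    exact ⟨fun i => (key (some i)).mp (h (some i)), (key none).mp (h none)⟩
  · rintro ⟨h1, h2⟩
    have htarget : ∀ o : Option (Fin n),
        (match o with
        | some i => f (Sum.inl (i-1)) + f (Sum.inr i) = f (Sum.inl i)
        | none => 0 = ∑ i : Fin n, f (Sum.inr i)) := by
      intro o
      match o with
      | some i => exact h1 i
      | none => exact h2
    intro v
    exact (key v).mpr (htarget v)

lemma ncard_inter_single {α : Type} (J : Set α) (a : α) :
    (J ∩ {a}).ncard = if a ∈ J then 1 else 0 := by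
  split_ifs with h
  · rw [Set.inter_eq_right.mpr (by simpa using h)]; exact Set.ncard_singleton a
  · have he : J ∩ {a} = ∅ := by
      ext x; simp only [Set.mem_inter_iff, Set.mem_singleton_iff, Set.mem_empty_iff_false,
        iff_false, not_and]
      rintro hx rfl; exact h hx
    rw [he]; exact Set.ncard_empty _

lemma ncard_inter_pair {α : Type} (J : Set α) (a b : α) (hab : a ≠ b) :
    (J ∩ {a, b}).ncard = (if a ∈ J then 1 else 0) + (if b ∈ J then 1 else 0) := by
  split_ifs with h1 h2 h2
  · rw [Set.inter_eq_right.mpr (by rintro x (rfl|rfl) <;> assumption)]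
    exact Set.ncard_pair hab
  · have he : J ∩ {a,b} = {a} := by
      ext x
      constructor
      · rintro ⟨hx, (rfl|rfl)⟩
        · rfl
        · exact absurd hx h2
      · rintro rfl; exact ⟨h1, Or.inl rfl⟩
    rw [he, Set.ncard_singleton]
  · have he : J ∩ {a,b} = {b} := by
      ext x
      constructor
      · rintro ⟨hx, (rfl|rfl)⟩
        · exact absurd hx h1
        · rfl
      · rintro rfl; exact ⟨h2, Or.inr rfl⟩
    rw [he, Set.ncard_singleton]
  · have he : J ∩ {a,b} = ∅ := by
      ext x
      simp only [Set.mem_inter_iff, Set.mem_empty_iff_false, iff_false, not_and]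
      rintro hx (rfl|rfl)
      · exact h1 hx
      · exact h2 hx
    rw [he, Set.ncard_empty]

lemma spoke_mem_iff (n : ℕ) [NeZero n] (hn : 3 ≤ n) (J : Set (Fin n ⊕ Fin n))
    (hJ : (wheel n).IsEvenSubgraph J) (i : Fin n) :
    Sum.inr i ∈ J ↔ ¬ (Sum.inl i ∈ J ↔ Sum.inl (i-1) ∈ J) := by
  have hJi := hJ (some i)
  have e1 : ∀ e : Fin n ⊕ Fin n, (e ∈ J ∧ (wheel n).src e = some i) ↔ e ∈ J ∩ {Sum.inl i} := by
    rintro (j|j) <;> simp [wheel]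
  have e2 : ∀ e : Fin n ⊕ Fin n, (e ∈ J ∧ (wheel n).tgt e = some i) ↔
      e ∈ J ∩ {Sum.inl (i-1), Sum.inr i} := by
    rintro (j|j) <;>
      simp only [wheel, rot_eq n hn, Option.some.injEq, Set.mem_inter_iff,
        Set.mem_insert_iff, Set.mem_singleton_iff, Sum.inl.injEq, Sum.inr.injEq] <;>
      constructor
    · rintro ⟨hj, rfl⟩; exact ⟨by simpa using hj, Or.inl (by ring)⟩
    · rintro ⟨hj, (rfl | h)⟩
      · exact ⟨hj, by ring⟩
      · simp at h
    · rintro ⟨hj, rfl⟩; exact ⟨hj, Or.inr rfl⟩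
    · rintro ⟨hj, (h | rfl)⟩
      · simp at h
      · exact ⟨hj, rfl⟩
  have c1 : Nat.card {e : (wheel n).E // e ∈ J ∧ (wheel n).src e = some i}
      = (if Sum.inl i ∈ J then 1 else 0) := by
    refine (Nat.card_congr (Equiv.subtypeEquivRight e1)).trans ?_
    rw [Nat.card_coe_set_eq]
    exact ncard_inter_single J _
  have c2 : Nat.card {e : (wheel n).E // e ∈ J ∧ (wheel n).tgt e = some i}
      = (if Sum.inl (i-1) ∈ J then 1 else 0) + (if Sum.inr i ∈ J then 1 else 0) := by
    refine (Nat.card_congr (Equiv.subtypeEquivRight e2)).trans ?_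
    rw [Nat.card_coe_set_eq]
    exact ncard_inter_pair J _ _ (by simp)
  erw [c1, c2] at hJi
  by_cases h1 : Sum.inl i ∈ J <;> by_cases h2 : Sum.inl (i-1) ∈ J <;>
    by_cases h3 : Sum.inr i ∈ J <;> simp [h1, h2, h3] at hJi ⊢ <;> tauto

lemma arc41_of'' {r : ℝ} (h1 : 4 < r) (h2 : r < 5) : ((r : AddCircle (5:ℝ)) ∈ arc 4 1) :=
  (mem_arc41_iff r).mpr ⟨0, by push_cast; linarith, by push_cast; linarith⟩

/-- the next value of the canonical faithful flow -/
noncomputable def wheelVal (sp sc : Prop) (x : ℝ) : ℝ :=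
  if sc then (if (((0:ℝ) < x ∧ x < 2) ↔ ¬ (sp ↔ sc)) then 3/5 else -(3/5))
  else (if (((0:ℝ) < x ∧ x < 2) ↔ ¬ (sp ↔ sc)) then 3/2 else 7/2)

/-- the canonical faithful flow values along the cycle -/
noncomputable def chain (n : ℕ) [NeZero n] (s : Fin n → Prop) (start : Fin n) : ℕ → ℝ
  | 0 => 11/10
  | (l+1) => wheelVal (s (start + (l : Fin n))) (s (start + (l : Fin n) + 1)) (chain n s start l)

lemma chain_val (n : ℕ) [NeZero n] (s : Fin n → Prop) (start : Fin n) (h0 : ¬ s start) :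
    ∀ l : ℕ,
      (s (start + (l : Fin n)) → chain n s start l = 3/5 ∨ chain n s start l = -(3/5)) ∧
      (¬ s (start + (l : Fin n)) →
        chain n s start l = 11/10 ∨ chain n s start l = 3/2 ∨ chain n s start l = 7/2) := by
  intro l
  induction l with
  | zero =>
    constructor
    · intro h; exfalso; apply h0; simpa using h
    · intro _; left; rfl
  | succ l ih =>
    have hidx : ((l+1 : ℕ) : Fin n) = (l : Fin n) + 1 := by push_cast; ring
    have hc : chain n s start (l+1)
        = wheelVal (s (start + (l : Fin n))) (s (start + (l : Fin n) + 1)) (chain n s start l) := by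
      simp [chain]
    rw [hidx, ← add_assoc]
    constructor
    · intro hsc
      rw [hc]
      unfold wheelVal
      rw [if_pos hsc]
      split_ifs <;> [left; right] <;> rfl
    · intro hsc
      rw [hc]
      unfold wheelVal
      rw [if_neg hsc]
      split_ifs <;> [right; right] <;> [left; right] <;> rfl

lemma chain_diff (n : ℕ) [NeZero n] (s : Fin n → Prop) (start : Fin n) (h0 : ¬ s start) (l : ℕ) :
    (¬ (s (start + (l : Fin n) + 1) ↔ s (start + (l : Fin n))) →
      ((chain n s start (l+1) - chain n s start l : ℝ) : AddCircle (5:ℝ)) ∈ arc 4 1) ∧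
    ((s (start + (l : Fin n) + 1) ↔ s (start + (l : Fin n))) →
      ((chain n s start (l+1) - chain n s start l : ℝ) : AddCircle (5:ℝ)) ∈ arc 1 4) := by
  have hv := chain_val n s start h0 l
  have hc : chain n s start (l+1)
      = wheelVal (s (start + (l : Fin n))) (s (start + (l : Fin n) + 1)) (chain n s start l) := by
    simp [chain]
  by_cases hsp : s (start + (l : Fin n)) <;> by_cases hsc : s (start + (l : Fin n) + 1)
  · -- TT : agree, flip sign
    refine ⟨fun hsw => absurd (iff_of_true hsc hsp) hsw, fun _ => ?_⟩
    rcases hv.1 hsp with hx | hx <;>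
      rw [hc] <;> unfold wheelVal <;> rw [if_pos hsc, hx]
    · rw [if_neg (by intro hiff; exact (hiff.mp (by norm_num)) (iff_of_true hsp hsc))]
      have he : (-(3/5) - 3/5 : ℝ) = -(6/5) := by norm_num
      rw [he]; exact arc14_of' (by norm_num) (by norm_num)
    · rw [if_pos (iff_of_false (by norm_num) (by tauto))]
      have he : (3/5 - -(3/5) : ℝ) = 6/5 := by norm_num
      rw [he]; exact arc14_of (by norm_num) (by norm_num)
  · -- TF : switch, keep sign
    refine ⟨fun _ => ?_, fun hagree => absurd hagree (by tauto)⟩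
    rcases hv.1 hsp with hx | hx <;>
      rw [hc] <;> unfold wheelVal <;> rw [if_neg hsc, hx]
    · rw [if_pos (iff_of_true (by norm_num) (by tauto))]
      have he : (3/2 - 3/5 : ℝ) = 9/10 := by norm_num
      rw [he]; exact arc41_of (by norm_num) (by norm_num)
    · rw [if_neg (by intro hiff; have := hiff.mpr (by tauto); norm_num at this)]
      have he : (7/2 - -(3/5) : ℝ) = 41/10 := by norm_num
      rw [he]; exact arc41_of'' (by norm_num) (by norm_num)
  · -- FT : switch, keep sign
    refine ⟨fun _ => ?_, fun hagree => absurd hagree (by tauto)⟩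
    rcases hv.2 hsp with hx | hx | hx <;>
      rw [hc] <;> unfold wheelVal <;> rw [if_pos hsc, hx]
    · rw [if_pos (iff_of_true (by norm_num) (by tauto))]
      have he : (3/5 - 11/10 : ℝ) = -(1/2) := by norm_num
      rw [he]; exact arc41_of (by norm_num) (by norm_num)
    · rw [if_pos (iff_of_true (by norm_num) (by tauto))]
      have he : (3/5 - 3/2 : ℝ) = -(9/10) := by norm_num
      rw [he]; exact arc41_of (by norm_num) (by norm_num)
    · rw [if_neg (by intro hiff; have := hiff.mpr (by tauto); norm_num at this)]
      have he : (-(3/5) - 7/2 : ℝ) = -(41/10) := by norm_num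
      rw [he]; exact arc41_of' (by norm_num) (by norm_num)
  · -- FF : agree, flip region
    refine ⟨fun hsw => absurd (iff_of_false hsc hsp) hsw, fun _ => ?_⟩
    rcases hv.2 hsp with hx | hx | hx <;>
      rw [hc] <;> unfold wheelVal <;> rw [if_neg hsc, hx]
    · rw [if_neg (by intro hiff; exact (hiff.mp (by norm_num)) (iff_of_false hsp hsc))]
      have he : (7/2 - 11/10 : ℝ) = 12/5 := by norm_num
      rw [he]; exact arc14_of (by norm_num) (by norm_num)
    · rw [if_neg (by intro hiff; exact (hiff.mp (by norm_num)) (iff_of_false hsp hsc))]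
      have he : (7/2 - 3/2 : ℝ) = 2 := by norm_num
      rw [he]; exact arc14_of (by norm_num) (by norm_num)
    · rw [if_pos (iff_of_false (by norm_num) (by tauto))]
      have he : (3/2 - 7/2 : ℝ) = -2 := by norm_num
      rw [he]; exact arc14_of' (by norm_num) (by norm_num)

lemma ex_seq (n : ℕ) [NeZero n] (hn : 3 ≤ n) (s : Fin n → Prop) (i₀ : Fin n)
    (g0 : ¬ s i₀) (g1 : ¬ s (i₀+1)) (g2 : ¬ s (i₀+2)) :
    ∃ a : Fin n → AddCircle (5:ℝ),
      (∀ i, s i → a i ∈ arc 4 1) ∧ (∀ i, ¬ s i → a i ∈ arc 1 4) ∧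
      (∀ i, ¬(s i ↔ s (i-1)) → a i - a (i-1) ∈ arc 4 1) ∧
      (∀ i, (s i ↔ s (i-1)) → a i - a (i-1) ∈ arc 1 4) := by
  have hone : (1 : Fin n).val = 1 := by rw [Fin.val_one']; exact Nat.mod_eq_of_lt (by omega)
  have h10 : (1 : Fin n) ≠ 0 := by
    intro h; rw [Fin.ext_iff, hone] at h; simp at h
  set m : Fin n := i₀ + 1 with hm
  set start : Fin n := i₀ + 2 with hstart
  have hsm : ¬ s m := g1
  have hss : ¬ s start := g2
  have htwo : (2 : Fin n).val = 2 := by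
    rw [show (2:Fin n) = ((2:ℕ):Fin n) by push_cast; ring, Fin.val_cast_of_lt (by omega)]
  have h12 : (1 : Fin n) ≠ 2 := by
    intro h; rw [Fin.ext_iff, hone, htwo] at h; simp at h
  have h02 : (0 : Fin n) ≠ 2 := by
    intro h; rw [Fin.ext_iff, htwo, Fin.val_zero] at h; simp at h
  have h01 : (0 : Fin n) ≠ 1 := fun h => h10 h.symm
  have hms : m ≠ start := by
    intro h; rw [hm, hstart] at h; exact h12 (by linear_combination h)
  have hsm' : start ≠ m := fun h => hms h.symm
  have him : i₀ ≠ m := by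
    intro h; rw [hm] at h; exact h01 (by linear_combination h)
  have his : i₀ ≠ start := by
    intro h; rw [hstart] at h; exact h02 (by linear_combination h)
  have hmstart : m - start = -1 := by rw [hm, hstart]; ring
  have histart : i₀ - start = -2 := by rw [hstart]; ring
  have hstartm : start - 1 = m := by rw [hm, hstart]; ring
  have hneg1 : ((n-1 : ℕ) : Fin n) = -1 := by
    have h1 : (((n-1 : ℕ)) : Fin n) + 1 = (((n-1)+1 : ℕ) : Fin n) := by push_cast; ring
    have h2 : n - 1 + 1 = n := by omega
    have h3 : (((n-1 : ℕ)) : Fin n) + 1 = 0 := by rw [h1, h2, Fin.natCast_self]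
    linear_combination h3
  have hneg2 : ((n-2 : ℕ) : Fin n) = -2 := by
    have h1 : (((n-2 : ℕ)) : Fin n) + 2 = (((n-2)+2 : ℕ) : Fin n) := by push_cast; ring
    have h2 : n - 2 + 2 = n := by omega
    have h3 : (((n-2 : ℕ)) : Fin n) + 2 = 0 := by rw [h1, h2, Fin.natCast_self]
    linear_combination h3
  have hvneg1 : (-1 : Fin n).val = n - 1 := by
    rw [← hneg1]; exact Fin.val_cast_of_lt (by omega)
  have hvneg2 : (-2 : Fin n).val = n - 2 := by
    rw [← hneg2]; exact Fin.val_cast_of_lt (by omega)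
  -- the real-valued flow
  set c : ℝ := chain n s start (n-2) with hcdef
  set tm : ℝ := if c < 2 then 3 else 23/10 with htmdef
  set t : Fin n → ℝ :=
    fun j => if j = m then tm else chain n s start ((j - start).val) with htdef
  have hF3 : ∀ j : Fin n, start + (((j - start).val : ℕ) : Fin n) = j := by
    intro j; rw [Fin.cast_val_eq_self]; ring
  have hcv := chain_val n s start hss
  have hcd := chain_diff n s start hss
  -- value of t away from m
  have htj : ∀ j : Fin n, j ≠ m → t j = chain n s start ((j - start).val) := by
    intro j hj; rw [htdef]; simp only [if_neg hj]
  have htm : t m = tm := by simp [htdef]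
  -- t at start and at i₀
  have htstart : t start = 11/10 := by
    rw [htj start hsm']
    simp only [sub_self, Fin.val_zero]
    rfl
  have hti0 : t i₀ = c := by
    rw [htj i₀ him, histart, hvneg2, hcdef]
  -- ranges of c
  have hcval : c = 11/10 ∨ c = 3/2 ∨ c = 7/2 := by
    rw [hcdef]
    apply (hcv (n-2)).2
    rw [hneg2]
    have : start + (-2 : Fin n) = i₀ := by rw [hstart]; ring
    rw [this]; exact g0
  have hmi0 : m - 1 = i₀ := by rw [hm]; ring
  have hm1s : m + 1 = start := by rw [hm, hstart]; ring
  have hspoke : ∀ i : Fin n,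
      (¬(s i ↔ s (i-1)) → ((t i - t (i-1) : ℝ) : AddCircle (5:ℝ)) ∈ arc 4 1) ∧
      ((s i ↔ s (i-1)) → ((t i - t (i-1) : ℝ) : AddCircle (5:ℝ)) ∈ arc 1 4) := by
    intro i
    by_cases h1 : i = start
    · rw [h1, hstartm, htstart, htm, htmdef]
      refine ⟨fun hsw => absurd (iff_of_false hss hsm) hsw, fun _ => ?_⟩
      split_ifs
      · rw [show (11/10 - 3 : ℝ) = -(19/10) by norm_num]
        exact arc14_of' (by norm_num) (by norm_num)
      · rw [show (11/10 - 23/10 : ℝ) = -(6/5) by norm_num]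
        exact arc14_of' (by norm_num) (by norm_num)
    · by_cases h2 : i = m
      · rw [h2, hmi0, htm, hti0, htmdef]
        refine ⟨fun hsw => absurd (iff_of_false hsm g0) hsw, fun _ => ?_⟩
        rcases hcval with hc | hc | hc <;> rw [hc]
        · rw [if_pos (by norm_num), show (3 - 11/10 : ℝ) = 19/10 by norm_num]
          exact arc14_of (by norm_num) (by norm_num)
        · rw [if_pos (by norm_num), show (3 - 3/2 : ℝ) = 3/2 by norm_num]
          exact arc14_of (by norm_num) (by norm_num)
        · rw [if_neg (by norm_num), show (23/10 - 7/2 : ℝ) = -(6/5) by norm_num]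
          exact arc14_of' (by norm_num) (by norm_num)
      · -- interior of the chain
        set l : ℕ := (i - start).val with hldef
        have hl0 : l ≠ 0 := by
          intro h
          apply h1
          have : i - start = 0 := by
            rw [Fin.ext_iff, Fin.val_zero, ← hldef, h]
          have h' : i = start := by linear_combination this
          exact h'
        have hln : l < n := (i - start).isLt
        have hln1 : l ≠ n - 1 := by
          intro h
          apply h2
          have h3 : i - start = -1 := by
            rw [← Fin.cast_val_eq_self (i - start), ← hldef, h, hneg1]
          have h4 : i = start - 1 := by linear_combination h3
          rw [h4, hstartm]
        obtain ⟨l', hl'⟩ : ∃ l', l = l' + 1 := ⟨l - 1, by omega⟩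
        have hisl : start + ((l : ℕ) : Fin n) = i := hF3 i
        have e2 : start + ((l' : ℕ) : Fin n) = i - 1 := by
          have : ((l : ℕ) : Fin n) = ((l' : ℕ) : Fin n) + 1 := by rw [hl']; push_cast; ring
          rw [this] at hisl
          linear_combination hisl
        have e1 : start + ((l' : ℕ) : Fin n) + 1 = i := by
          rw [e2]; ring
        have hi1m : i - 1 ≠ m := by
          intro h
          apply h1
          have : i = m + 1 := by linear_combination h
          rw [this, hm1s]
        have hti : t i = chain n s start (l' + 1) := by rw [htj i h2, ← hldef, hl']
        have hti1 : t (i - 1) = chain n s start l' := by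
          rw [htj (i-1) hi1m]
          congr 1
          have : (i - 1) - start = ((l' : ℕ) : Fin n) := by linear_combination e2.symm
          rw [this, Fin.val_cast_of_lt (by omega)]
        constructor
        · intro hsw
          rw [hti, hti1]
          exact (hcd l').1 (by rw [e1, e2]; exact hsw)
        · intro hagree
          rw [hti, hti1]
          exact (hcd l').2 (by rw [e1, e2]; exact hagree)
  refine ⟨fun j => ((t j : ℝ) : AddCircle (5:ℝ)), ?_, ?_, ?_, ?_⟩
  · -- values on S
    intro i hi
    show ((t i : ℝ) : AddCircle (5:ℝ)) ∈ arc 4 1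
    by_cases him2 : i = m
    · exact absurd hi (him2 ▸ hsm)
    · rw [htj i him2]
      have := (hcv ((i - start).val)).1 (by rw [hF3]; exact hi)
      rcases this with hx | hx <;> rw [hx]
      · exact arc41_of (by norm_num) (by norm_num)
      · exact arc41_of (by norm_num) (by norm_num)
  · -- values off S
    intro i hi
    show ((t i : ℝ) : AddCircle (5:ℝ)) ∈ arc 1 4
    by_cases him2 : i = m
    · rw [him2, htm, htmdef]
      split_ifs <;> [exact arc14_of (by norm_num) (by norm_num);
        exact arc14_of (by norm_num) (by norm_num)]
    · rw [htj i him2]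
      have := (hcv ((i - start).val)).2 (by rw [hF3]; exact hi)
      rcases this with hx | hx | hx <;> rw [hx]
      · exact arc14_of (by norm_num) (by norm_num)
      · exact arc14_of (by norm_num) (by norm_num)
      · exact arc14_of (by norm_num) (by norm_num)
  · -- switch spokes
    intro i hi
    show ((t i : ℝ) : AddCircle (5:ℝ)) - ((t (i-1) : ℝ) : AddCircle (5:ℝ)) ∈ arc 4 1
    rw [← coe_sub_eq]
    exact (hspoke i).1 hi
  · -- agree spokes
    intro i hi
    show ((t i : ℝ) : AddCircle (5:ℝ)) - ((t (i-1) : ℝ) : AddCircle (5:ℝ)) ∈ arc 1 4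
    rw [← coe_sub_eq]
    exact (hspoke i).2 hi

end AuxProof

/-- for odd `n ≥ 3` and a nonempty even subgraph `J` of the wheel
`W_n`, the wheel has no `σ_{J,(4,1)}`-faithful flow iff among any three
consecutive edges of the external cycle at least one belongs to `J`
(equivalently, `J` has no `m`-connector with `m ≥ 2`). -/
theorem odd_wheel_no_faithful_iff (n : ℕ) (hn : 3 ≤ n) (hodd : Odd n)
    (J : Set (wheel n).E) (hJ : (wheel n).IsEvenSubgraph J) (hJne : J.Nonempty) :
    ¬ (wheel n).HasFaithfulOn J (arc 4 1) ↔
      ∀ i : Fin n, Sum.inl i ∈ J ∨ Sum.inl (rot n i) ∈ J ∨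
        Sum.inl (rot n (rot n i)) ∈ J := by
  haveI : NeZero n := ⟨by omega⟩
  set s : Fin n → Prop := fun i => Sum.inl i ∈ J with hs
  have hrot : ∀ i : Fin n, rot n i = i + 1 := rot_eq n hn
  have hrr : ∀ i : Fin n, rot n (rot n i) = i + 2 := by
    intro i; rw [hrot, hrot]; open Fin.CommRing in ring
  have hspoke := spoke_mem_iff n hn J hJ
  constructor
  · intro hno i
    by_contra hcon
    push_neg at hcon
    obtain ⟨c0, c1, c2⟩ := hcon
    rw [hrot] at c1
    rw [hrr] at c2
    obtain ⟨a, ha1, ha2, ha3, ha4⟩ := ex_seq n hn s i c0 c1 c2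
    apply hno
    refine ⟨Sum.elim a (fun j => a j - a (j-1)), ?_, ?_, ?_⟩
    · apply (wheel_isFlow_iff n hn _).mpr
      constructor
      · intro j
        simp only [Sum.elim_inl, Sum.elim_inr]
        abel
      · show (0 : AddCircle (5:ℝ)) = ∑ j : Fin n, (a j - a (j-1))
        rw [Finset.sum_sub_distrib]
        have hsh : ∑ j : Fin n, a (j-1) = ∑ j : Fin n, a j :=
          Fintype.sum_equiv (Equiv.subRight 1) _ _ (fun j => rfl)
        rw [hsh, sub_self]
    · rintro (j | j) hj
      · exact ha1 j hj
      · exact ha3 j ((hspoke j).mp hj)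
    · rintro (j | j) hj
      · exact ha2 j hj
      · refine ha4 j ?_
        have := (hspoke j).not.mp hj
        tauto
  · intro hgap hflow
    obtain ⟨f, hf, hfJ, hfN⟩ := hflow
    have hrel := (wheel_isFlow_iff n hn f).mp hf
    set a : Fin n → AddCircle (5:ℝ) := fun i => f (Sum.inl i) with ha
    have hdiffs : ∀ i : Fin n, f (Sum.inr i) = a i - a (i-1) := by
      intro i
      exact eq_sub_of_add_eq' (hrel.1 i)
    refine no_seq n hn hodd s ?_ a ?_ ?_ ?_ ?_
    · intro i
      have := hgap i
      rwa [hrr, hrot] at this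
    · intro i hi
      exact hfJ _ hi
    · intro i hi
      exact hfN _ hi
    · intro i hi
      have hmem : Sum.inr i ∈ J := (hspoke i).mpr hi
      have := hfJ _ hmem
      rwa [hdiffs] at this
    · intro i hi
      have hmem : Sum.inr i ∉ J := by
        erw [hspoke i]
        tauto
      have := hfN _ hmem
      rwa [hdiffs] at this
end

section
/- For every n ≥ 3 and every nonempty even subgraph J of the wheel W_n, the wheel W_n admits a σ_{J,(4,1)∪(2,3)}-faithful flow, i.e. a modular 5-flow f on W_n with f(e) ∈ (4,1)∪(2,3) for every edge e ∈ J and f(e) ∈ (1,4) for every edge e ∉ J. (Consequently, every graph in the family (W_n, J_{(4,1)∪(2,3)}) has circular flow number strictly less than 5.) -/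
open scoped Classical

/-! At a rim vertex `v_i` the even subgraph `J` contains an even number of the three edges
`v_{i-1}v_i`, `v_iv_{i+1}` and the spoke, so the spoke lies in `J` exactly when one of the two
rim edges does. If the rim edge `v_iv_{i+1}` carries `x_i`, then giving the spoke at `v_i` the
value `x_i - x_{i-1}` always yields a flow. We take `x_i` from a table indexed by whether the rim
edge is in `J` and by the colour of `i` in a proper 3-colouring of the rim cycle: the points
`0.9, 2.1, -0.4` of `ℝ/5ℤ` for rim edges in `J`, and the same points shifted by `1.6` for the
others. All capacity constraints then reduce to a finite check on residues of tenths mod 50. -/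

namespace wheel

variable {n : ℕ}

def rim (i : Fin n) : (wheel n).E := Sum.inl i

def spoke (i : Fin n) : (wheel n).E := Sum.inr i

lemma sum_edges {M : Type*} [AddCommMonoid M] (g : (wheel n).E → M) :
    ∑ e, g e = ∑ i, g (rim i) + ∑ i, g (spoke i) :=
  Fintype.sum_sum_type g

@[simp] lemma src_rim (i : Fin n) : (wheel n).src (rim i) = some i := rfl

@[simp] lemma src_spoke (i : Fin n) : (wheel n).src (spoke i) = none := rfl

@[simp] lemma tgt_spoke (i : Fin n) : (wheel n).tgt (spoke i) = some i := rfl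

-- `(wheel n).V` is not reducibly `Option (Fin n)`, so `Option.some_inj` does not fire on it.
@[simp] lemma some_eq_some_iff (i j : Fin n) : @Eq (wheel n).V (some i) (some j) ↔ i = j :=
  Option.some_inj

variable [NeZero n]

lemma rot_eq_add_one (i : Fin n) : rot n i = i + 1 := by
  ext
  simp [rot, Fin.val_add]

@[simp] lemma tgt_rim (i : Fin n) : (wheel n).tgt (rim i) = some (i + 1) :=
  congrArg some (rot_eq_add_one i)

lemma spoke_mem_iff {J : Set (wheel n).E} (hJ : (wheel n).IsEvenSubgraph J) (i : Fin n) :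
    decide (spoke i ∈ J) = xor (decide (rim (i - 1) ∈ J)) (decide (rim i ∈ J)) := by
  have h := hJ (some i)
  simp only [Nat.card_eq_fintype_card, Fintype.card_subtype, Finset.card_filter, sum_edges,
    and_comm (a := _ ∈ J)] at h
  simp [← eq_sub_iff_add_eq, ite_and] at h
  split_ifs at h <;> simp_all [Nat.even_iff]

variable {M : Type*} [AddCommGroup M]

def potentialFlow (x : Fin n → M) : (wheel n).E → M :=
  Sum.elim x fun i => x i - x (i - 1)

@[simp] lemma potentialFlow_rim (x : Fin n → M) (i : Fin n) : potentialFlow x (rim i) = x i := rfl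

@[simp] lemma potentialFlow_spoke (x : Fin n → M) (i : Fin n) :
    potentialFlow x (spoke i) = x i - x (i - 1) := rfl

lemma isFlow_potentialFlow (x : Fin n → M) : (wheel n).IsFlow (potentialFlow x) := by
  rintro (_ | i) <;> simp only [sum_edges, Set.indicator_apply, Set.mem_ofPred_eq]
  · have hshift : ∑ i, x (i - 1) = ∑ i, x i := (Equiv.subRight 1).sum_comp x
    simp [wheel, rim, spoke, potentialFlow, hshift]
  · simp [← eq_sub_iff_add_eq]

end wheel

def cycleColouring (n : ℕ) (i : Fin n) : Fin 3 :=
  if i.val + 1 = n then 2 else if i.val % 2 = 0 then 0 else 1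

lemma Fin.val_sub_one_eq_ite {n : ℕ} [NeZero n] (hn : 2 ≤ n) (i : Fin n) :
    (i - 1).val = if i.val = 0 then n - 1 else i.val - 1 := by
  have h1 : (1 : Fin n).val = 1 := Nat.mod_eq_of_lt hn
  rw [Fin.sub_def]
  simp only [h1]
  split_ifs with h
  · rw [h, add_zero, Nat.mod_eq_of_lt (by omega)]
  · rw [show n - 1 + i = (i - 1) + n by omega, Nat.add_mod_right, Nat.mod_eq_of_lt (by omega)]

lemma cycleColouring_sub_one_ne {n : ℕ} [NeZero n] (hn : 2 ≤ n) (i : Fin n) :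
    cycleColouring n (i - 1) ≠ cycleColouring n i := by
  have := i.isLt
  unfold cycleColouring
  rw [Fin.val_sub_one_eq_ite hn]
  split_ifs <;> simp only [ne_eq, Fin.ext_iff, Fin.isValue, Fin.val_zero, Fin.val_one,
    Fin.val_two] <;> omega

noncomputable def tenths : ℤ →+ AddCircle (5 : ℝ) :=
  zmultiplesHom _ ((1 / 10 : ℝ) : AddCircle (5 : ℝ))

lemma tenths_apply (m : ℤ) : tenths m = ((m / 10 : ℝ) : AddCircle (5 : ℝ)) := by
  rw [tenths, zmultiplesHom_apply, ← AddCircle.coe_zsmul, zsmul_eq_mul]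
  ring_nf

lemma tenths_add_fifty_mul (m k : ℤ) : tenths (m + 50 * k) = tenths m := by
  have h50 : tenths 50 = 0 := by
    rw [tenths_apply]
    norm_num
  rw [map_add, mul_comm, ← smul_eq_mul, map_zsmul, h50, smul_zero, add_zero]

lemma tenths_mem_arc {a b m : ℤ} (k : ℤ)
    (h : 10 * a < m + 50 * k ∧ m + 50 * k < 10 * arcEnd a b) : tenths m ∈ arc a b := by
  rw [← tenths_add_fifty_mul m k, tenths_apply]
  refine ⟨(m + 50 * k : ℤ) / 10, ⟨?_, ?_⟩, rfl⟩
  · rw [lt_div_iff₀ (by norm_num)]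
    exact_mod_cast (by linarith [h.1] : a * 10 < m + 50 * k)
  · rw [div_lt_iff₀ (by norm_num)]
    exact_mod_cast (by linarith [h.2] : m + 50 * k < arcEnd a b * 10)

/-- The capacity `σ_{J,A}(e)` for `A = (4,1) ∪ (2,3)`, where `b` records whether `e ∈ J`. -/
def faithfulCap (b : Bool) : Set (AddCircle (5 : ℝ)) :=
  if b then arc 4 1 ∪ arc 2 3 else arc 1 4

def inCapTenths : Bool → ℤ → Bool
  | false, m => 10 < m % 50 && m % 50 < 40
  | true, m => m % 50 < 10 || 20 < m % 50 && m % 50 < 30 || 40 < m % 50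

lemma tenths_mem_faithfulCap {b : Bool} {m : ℤ} (h : inCapTenths b m) :
    tenths m ∈ faithfulCap b := by
  have h14 : arcEnd 1 4 = 4 := by decide
  have h41 : arcEnd 4 1 = 6 := by decide
  have h23 : arcEnd 2 3 = 3 := by decide
  cases b <;> simp only [inCapTenths, faithfulCap, Bool.or_eq_true, Bool.and_eq_true,
    decide_eq_true_eq, Bool.false_eq_true, if_true, if_false] at h ⊢
  · exact tenths_mem_arc (-(m / 50)) (by omega)
  · rcases h with (h | h) | h
    · exact .inl (tenths_mem_arc (1 - m / 50) (by omega))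
    · exact .inr (tenths_mem_arc (-(m / 50)) (by omega))
    · exact .inl (tenths_mem_arc (-(m / 50)) (by omega))

def rimValue (b : Bool) (c : Fin 3) : ℤ := ![9, 21, -4] c + if b then 0 else 16

lemma inCapTenths_rimValue : ∀ b c, inCapTenths b (rimValue b c) := by decide

lemma inCapTenths_rimValue_sub :
    ∀ b b' c c', c ≠ c' → inCapTenths (xor b b') (rimValue b' c' - rimValue b c) := by decide

theorem wheel_41_23_hasFaithful_general (n : ℕ) (hn : 3 ≤ n)
    (J : Set (wheel n).E) (hJ : (wheel n).IsEvenSubgraph J) :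
    (wheel n).HasFaithfulOn J (arc 4 1 ∪ arc 2 3) := by
  have : NeZero n := ⟨by omega⟩
  let x : Fin n → ℤ := fun i => rimValue (decide (wheel.rim i ∈ J)) (cycleColouring n i)
  have hcap : ∀ e, wheel.potentialFlow (tenths ∘ x) e ∈ faithfulCap (decide (e ∈ J)) := by
    rintro (i | i)
    · exact tenths_mem_faithfulCap (inCapTenths_rimValue _ _)
    · change wheel.potentialFlow _ (wheel.spoke i) ∈ faithfulCap (decide (wheel.spoke i ∈ J))
      rw [wheel.potentialFlow_spoke, Function.comp_apply, Function.comp_apply, ← map_sub,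
        wheel.spoke_mem_iff hJ i]
      exact tenths_mem_faithfulCap
        (inCapTenths_rimValue_sub _ _ _ _ (cycleColouring_sub_one_ne (by omega) i))
  refine ⟨_, wheel.isFlow_potentialFlow (tenths ∘ x), fun e he => ?_, fun e he => ?_⟩
  · simpa [faithfulCap, he] using hcap e
  · simpa [faithfulCap, he] using hcap e

/-- for every `n ≥ 3` and every nonempty even subgraph `J` of the
wheel `W_n`, the wheel admits a `σ_{J,(4,1)∪(2,3)}`-faithful flow. -/
theorem wheel_41_23_hasFaithful (n : ℕ) (hn : 3 ≤ n)
    (J : Set (wheel n).E) (hJ : (wheel n).IsEvenSubgraph J) (hJne : J.Nonempty) :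
    (wheel n).HasFaithfulOn J (arc 4 1 ∪ arc 2 3) :=
  wheel_41_23_hasFaithful_general n hn J hJ
end
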